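/- If G is a planar graph with maximum degree Δ(G) ≤ κ − 1 where κ ≥ 11, all proper subgraphs of G have total chromatic number at most κ, and χ''(G) > κ, then G contains no edge uv with deg(v) = 2 and deg(u) + deg(v) ≤ κ; that is, no planar κ-deletion-minimal graph with κ ≥ 11 has a vertex of degree 2 adjacent to a vertex of degree at most κ − 2. -/

import Mathlib

open SimpleGraph

variable {V : Type*}

/-- The degree of a vertex, defined via the cardinality of its neighbor set. -/
noncomputable def deg (G : SimpleGraph V) (v : V) : ℕ := (G.neighborSet v).ncard

/-- The maximum degree of a graph. -/
noncomputable def maxDeg (G : SimpleGraph V) : ℕ := ⨆ v, deg G v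

/-- `fv` colors the vertices and `fe` colors the edges; together they form a total
coloring: adjacent vertices get distinct colors, distinct edges sharing a vertex get
distinct colors, and a vertex gets a color distinct from every edge incident to it. -/
def IsTotalColoring (G : SimpleGraph V) {α : Type*} (fv : V → α) (fe : Sym2 V → α) : Prop :=
  (∀ u v : V, G.Adj u v → fv u ≠ fv v) ∧
  (∀ e₁ e₂ : Sym2 V, e₁ ∈ G.edgeSet → e₂ ∈ G.edgeSet → e₁ ≠ e₂ →
      (∃ w : V, w ∈ e₁ ∧ w ∈ e₂) → fe e₁ ≠ fe e₂) ∧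
  (∀ (v : V) (e : Sym2 V), e ∈ G.edgeSet → v ∈ e → fv v ≠ fe e)

/-- `G` has a total coloring with `n` colors. -/
def HasTotalColoring (G : SimpleGraph V) (n : ℕ) : Prop :=
  ∃ (fv : V → Fin n) (fe : Sym2 V → Fin n), IsTotalColoring G fv fe

/-- The total chromatic number of `G`. -/
noncomputable def totalChromaticNumber (G : SimpleGraph V) : ℕ :=
  sInf {n | HasTotalColoring G n}

/-- A `κ`-deletion-minimal graph: maximum degree at most `κ - 1`, total chromatic
number greater than `κ`, but every proper subgraph has total chromatic number at most `κ`. -/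
def DeletionMinimal (κ : ℕ) (G : SimpleGraph V) : Prop :=
  (∀ v : V, deg G v ≤ κ - 1) ∧ κ < totalChromaticNumber G ∧
  ∀ H : SimpleGraph V, H < G → totalChromaticNumber H ≤ κ

/-- A planar embedding of `G`: vertices are mapped injectively to the plane, each
edge to a simple arc joining its endpoints, arcs avoid other vertices, the two
orientations of an edge give the same arc (reversed), and interiors of arcs of
distinct edges are disjoint. -/
structure IsPlanarEmbedding {V : Type*} (G : SimpleGraph V) (vmap : V → ℝ × ℝ)
    (emap : ∀ {u v : V}, G.Adj u v → ℝ → ℝ × ℝ) : Prop where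
  vinj : Function.Injective vmap
  source : ∀ {u v : V} (h : G.Adj u v), emap h 0 = vmap u
  target : ∀ {u v : V} (h : G.Adj u v), emap h 1 = vmap v
  cont : ∀ {u v : V} (h : G.Adj u v), ContinuousOn (emap h) (Set.Icc 0 1)
  inj : ∀ {u v : V} (h : G.Adj u v), Set.InjOn (emap h) (Set.Icc 0 1)
  symm : ∀ {u v : V} (h : G.Adj u v), ∀ t ∈ Set.Icc (0:ℝ) 1,
    emap h.symm t = emap h (1 - t)
  avoid : ∀ {u v : V} (h : G.Adj u v), ∀ w : V, w ≠ u → w ≠ v →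
    vmap w ∉ emap h '' Set.Ioo 0 1
  disj : ∀ {u v x y : V} (h₁ : G.Adj u v) (h₂ : G.Adj x y), s(u, v) ≠ s(x, y) →
    Disjoint (emap h₁ '' Set.Ioo 0 1) (emap h₂ '' Set.Ioo 0 1)

/-- A graph is planar if it admits a planar embedding. -/
def PlanarGraph {V : Type*} (G : SimpleGraph V) : Prop :=
  ∃ (vmap : V → ℝ × ℝ) (emap : ∀ {u v : V}, G.Adj u v → ℝ → ℝ × ℝ),
    IsPlanarEmbedding G vmap emap


lemma hasTotalColoring_mono {V : Type*} {G : SimpleGraph V} {n m : ℕ}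
    (h : HasTotalColoring G n) (hnm : n ≤ m) : HasTotalColoring G m := by
  obtain ⟨fv, fe, h1, h2, h3⟩ := h
  refine ⟨Fin.castLE hnm ∘ fv, Fin.castLE hnm ∘ fe, ?_, ?_, ?_⟩
  · intro a b hab hc; exact h1 a b hab (Fin.castLE_injective hnm hc)
  · intro e₁ e₂ he₁ he₂ hne hsh hc
    exact h2 e₁ e₂ he₁ he₂ hne hsh (Fin.castLE_injective hnm hc)
  · intro w e he hwe hc; exact h3 w e he hwe (Fin.castLE_injective hnm hc)

lemma exists_hasTotalColoring {V : Type*} [Fintype V] (G : SimpleGraph V) :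
    ∃ n, HasTotalColoring G n := by
  classical
  obtain ⟨n, ⟨f⟩⟩ := Finite.exists_equiv_fin (V ⊕ Sym2 V)
  refine ⟨n, f ∘ Sum.inl, f ∘ Sum.inr, ?_, ?_, ?_⟩
  · intro a b hab h; exact hab.ne (Sum.inl.inj (f.injective h))
  · intro e₁ e₂ _ _ hne _ h; exact hne (Sum.inr.inj (f.injective h))
  · intro w e _ _ h
    have := f.injective h
    simp at this

lemma hasTotalColoring_of_le {V : Type*} [Fintype V] {G : SimpleGraph V} {κ : ℕ}
    (h : totalChromaticNumber G ≤ κ) : HasTotalColoring G κ := by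
  have hne : {n | HasTotalColoring G n}.Nonempty := exists_hasTotalColoring G
  exact hasTotalColoring_mono (Nat.sInf_mem hne) h

/-- no planar κ-deletion-minimal graph with κ ≥ 11 contains an edge
`uv` with `deg v = 2` and `deg u ≤ κ - 2` (equivalently `deg u + deg v ≤ κ`):
such an edge yields a contradiction. -/
theorem stmt_18 {V : Type*} [Fintype V] (κ : ℕ) (hκ : 11 ≤ κ)
    (G : SimpleGraph V) (hplanar : PlanarGraph G) (hG : DeletionMinimal κ G)
    (u v : V) (huv : G.Adj u v) (hv : deg G v = 2) (hu : deg G u ≤ κ - 2) :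
    False := by
  classical
  obtain ⟨hdeg, hχ, hmin⟩ := hG
  set e₀ : Sym2 V := s(u, v) with he₀
  set H : SimpleGraph V := G.deleteEdges {e₀} with hH
  have hHlt : H < G := by
    refine lt_of_le_of_ne (SimpleGraph.deleteEdges_le _) ?_
    intro hEq
    have : H.Adj u v := hEq ▸ huv
    simp [hH, SimpleGraph.deleteEdges_adj, he₀] at this
  obtain ⟨fv, fe, hfv, hfe, hvfe⟩ := hasTotalColoring_of_le (hmin H hHlt)
  have hvmem : v ∈ G.neighborSet u := huv
  have humem : u ∈ G.neighborSet v := huv.symm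
  -- neighbor sets of H
  have hNu : H.neighborSet u = G.neighborSet u \ {v} := by
    ext w
    simp only [SimpleGraph.mem_neighborSet, hH, SimpleGraph.deleteEdges_adj,
      Set.mem_diff, Set.mem_singleton_iff]
    constructor
    · rintro ⟨h1, h2⟩
      exact ⟨h1, fun h => h2 (by simp [he₀, h])⟩
    · rintro ⟨h1, h2⟩
      refine ⟨h1, fun h => ?_⟩
      simp only [Set.mem_singleton_iff, he₀] at h
      exact h2 (Sym2.congr_right.mp h)
  have hNv : H.neighborSet v = G.neighborSet v \ {u} := by
    ext w
    simp only [SimpleGraph.mem_neighborSet, hH, SimpleGraph.deleteEdges_adj,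
      Set.mem_diff, Set.mem_singleton_iff]
    constructor
    · rintro ⟨h1, h2⟩
      refine ⟨h1, fun h => ?_⟩
      exact h2 (by simp only [Set.mem_singleton_iff, he₀, h]; rw [Sym2.eq_swap])
    · rintro ⟨h1, h2⟩
      refine ⟨h1, fun h => ?_⟩
      simp only [Set.mem_singleton_iff, he₀] at h
      rw [Sym2.eq_swap] at h
      exact h2 (Sym2.congr_left.mp h)
  have hdHu : (H.neighborSet u).ncard = deg G u - 1 := by
    rw [hNu, Set.ncard_diff_singleton_of_mem hvmem]
    rfl
  have hdHv : (H.neighborSet v).ncard = 1 := by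
    rw [hNv, Set.ncard_diff_singleton_of_mem humem]
    show deg G v - 1 = 1
    omega
  have hu1 : 1 ≤ deg G u := by
    have : 0 < (G.neighborSet u).ncard := (Set.ncard_pos (Set.toFinite _)).mpr ⟨v, hvmem⟩
    exact this
  -- choose a color for the edge uv
  set A : Set (Fin κ) :=
    ((fun w => fe s(u, w)) '' H.neighborSet u) ∪
      ((fun w => fe s(v, w)) '' H.neighborSet v) ∪ {fv u} with hA
  have hAcard : A.ncard < κ := by
    have h1 : A.ncard ≤ (((fun w => fe s(u, w)) '' H.neighborSet u) ∪
        ((fun w => fe s(v, w)) '' H.neighborSet v)).ncard + ({fv u} : Set (Fin κ)).ncard :=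
      Set.ncard_union_le _ _
    have h2 := Set.ncard_union_le ((fun w => fe s(u, w)) '' H.neighborSet u)
      ((fun w => fe s(v, w)) '' H.neighborSet v)
    have h3 := Set.ncard_image_le (s := H.neighborSet u) (f := fun w => fe s(u, w))
      (Set.toFinite _)
    have h4 := Set.ncard_image_le (s := H.neighborSet v) (f := fun w => fe s(v, w))
      (Set.toFinite _)
    rw [hdHu] at h3
    rw [hdHv] at h4
    have h5 : ({fv u} : Set (Fin κ)).ncard = 1 := Set.ncard_singleton _
    omega
  obtain ⟨c, hc⟩ : ∃ c : Fin κ, c ∉ A := by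
    by_contra h
    push_neg at h
    have hAu : A = Set.univ := Set.eq_univ_of_forall h
    rw [hAu, Set.ncard_univ] at hAcard
    simp at hAcard
  set fe' : Sym2 V → Fin κ := fun e => if e = e₀ then c else fe e with hfe'
  -- choose a color for the vertex v
  set B : Set (Fin κ) :=
    ((fun w => fe' s(v, w)) '' G.neighborSet v) ∪ (fv '' G.neighborSet v) with hB
  have hBcard : B.ncard < κ := by
    have h1 : B.ncard ≤ ((fun w => fe' s(v, w)) '' G.neighborSet v).ncard
        + (fv '' G.neighborSet v).ncard := Set.ncard_union_le _ _
    have h2 := Set.ncard_image_le (s := G.neighborSet v) (f := fun w => fe' s(v, w))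
      (Set.toFinite _)
    have h3 := Set.ncard_image_le (s := G.neighborSet v) (f := fv) (Set.toFinite _)
    have h4 : (G.neighborSet v).ncard = 2 := hv
    omega
  obtain ⟨d, hd⟩ : ∃ d : Fin κ, d ∉ B := by
    by_contra h
    push_neg at h
    have hBu : B = Set.univ := Set.eq_univ_of_forall h
    rw [hBu, Set.ncard_univ] at hBcard
    simp at hBcard
  set fv' : V → Fin κ := fun w => if w = v then d else fv w with hfv'
  -- basic facts
  have edge_mem_H : ∀ e, e ∈ G.edgeSet → e ≠ e₀ → e ∈ H.edgeSet := by
    intro e he hne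
    rw [hH, SimpleGraph.edgeSet_deleteEdges]
    exact ⟨he, by simpa using hne⟩
  have hmemA : ∀ e, e ∈ H.edgeSet → (u ∈ e ∨ v ∈ e) → fe e ∈ A := by
    intro e he hm
    induction e using Sym2.inductionOn with
    | hf a b =>
      rw [SimpleGraph.mem_edgeSet] at he
      rcases hm with hm | hm <;> rw [Sym2.mem_iff] at hm
      · rcases hm with rfl | rfl
        · exact Or.inl (Or.inl ⟨b, he, rfl⟩)
        · refine Or.inl (Or.inl ⟨a, he.symm, ?_⟩)
          simp only []
          rw [Sym2.eq_swap]
      · rcases hm with rfl | rfl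
        · exact Or.inl (Or.inr ⟨b, he, rfl⟩)
        · refine Or.inl (Or.inr ⟨a, he.symm, ?_⟩)
          simp only []
          rw [Sym2.eq_swap]
  have hmemB : ∀ e, e ∈ G.edgeSet → v ∈ e → fe' e ∈ B := by
    intro e he hm
    induction e using Sym2.inductionOn with
    | hf a b =>
      rw [SimpleGraph.mem_edgeSet] at he
      rw [Sym2.mem_iff] at hm
      rcases hm with rfl | rfl
      · exact Or.inl ⟨b, he, rfl⟩
      · refine Or.inl ⟨a, he.symm, ?_⟩
        simp only []
        rw [Sym2.eq_swap]
  have hfvuA : fv u ∈ A := Or.inr rfl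
  -- the new functions give a total coloring of G
  have hGcol : HasTotalColoring G κ := by
    refine ⟨fv', fe', ?_, ?_, ?_⟩
    · -- vertices
      intro a b hab
      simp only [hfv']
      by_cases ha : a = v
      · have hb : b ≠ v := by
          intro h
          rw [ha, h] at hab
          exact G.loopless.irrefl v hab
        rw [if_pos ha, if_neg hb]
        intro hcon
        exact hd (Or.inr ⟨b, ha ▸ hab, hcon.symm⟩)
      · by_cases hb : b = v
        · rw [if_pos hb, if_neg ha]
          intro hcon
          exact hd (Or.inr ⟨a, hb ▸ hab.symm, hcon⟩)
        · rw [if_neg ha, if_neg hb]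
          have hne : s(a, b) ≠ e₀ := by
            intro h
            have : v ∈ s(a, b) := by rw [h, he₀]; exact Sym2.mem_mk_right u v
            rw [Sym2.mem_iff] at this
            rcases this with h1 | h1
            · exact ha h1.symm
            · exact hb h1.symm
          have : H.Adj a b := by
            rw [hH, SimpleGraph.deleteEdges_adj]
            exact ⟨hab, by simpa using hne⟩
          exact hfv a b this
    · -- edges
      intro e₁ e₂ he₁ he₂ hne ⟨w, hw1, hw2⟩
      by_cases h₁ : e₁ = e₀
      · subst h₁
        have h₂ : e₂ ≠ e₀ := fun h => hne (h ▸ rfl)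
        have he₂H : e₂ ∈ H.edgeSet := edge_mem_H e₂ he₂ h₂
        have hwuv : u ∈ e₂ ∨ v ∈ e₂ := by
          rw [he₀, Sym2.mem_iff] at hw1
          rcases hw1 with rfl | rfl
          · exact Or.inl hw2
          · exact Or.inr hw2
        simp only [hfe', if_pos rfl, if_neg h₂]
        intro hcon
        exact hc (hcon ▸ hmemA e₂ he₂H hwuv)
      · by_cases h₂ : e₂ = e₀
        · subst h₂
          have he₁H : e₁ ∈ H.edgeSet := edge_mem_H e₁ he₁ h₁
          have hwuv : u ∈ e₁ ∨ v ∈ e₁ := by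
            rw [he₀, Sym2.mem_iff] at hw2
            rcases hw2 with rfl | rfl
            · exact Or.inl hw1
            · exact Or.inr hw1
          simp only [hfe', if_pos rfl, if_neg h₁]
          intro hcon
          exact hc (hcon.symm ▸ hmemA e₁ he₁H hwuv)
        · simp only [hfe', if_neg h₁, if_neg h₂]
          exact hfe e₁ e₂ (edge_mem_H e₁ he₁ h₁) (edge_mem_H e₂ he₂ h₂) hne ⟨w, hw1, hw2⟩
    · -- vertex vs edge
      intro w e he hwe
      simp only [hfv']
      by_cases hw : w = v
      · rw [if_pos hw]
        intro hcon
        exact hd (hcon ▸ hmemB e he (hw ▸ hwe))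
      · rw [if_neg hw]
        by_cases heq : e = e₀
        · have hwu : w = u := by
            rw [heq, he₀, Sym2.mem_iff] at hwe
            rcases hwe with h | h
            · exact h
            · exact absurd h hw
          have hfeq : fe' e = c := by rw [hfe', heq]; simp
          rw [hwu, hfeq]
          intro hcon
          exact hc (hcon ▸ hfvuA)
        · have hfeq : fe' e = fe e := by rw [hfe']; simp [heq]
          rw [hfeq]
          exact hvfe w e (edge_mem_H e he heq) hwe
  have hle : totalChromaticNumber G ≤ κ := Nat.sInf_le hGcol
  omega
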